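/- Let K_1,...,K_m be entrywise nonnegative n×n matrices and α_1,...,α_m nonnegative reals with Σ α_j = 1. Then the numerical radius satisfies w(K_1^{(α_1)} ∘ ··· ∘ K_m^{(α_m)}) ≤ w(K_1)^{α_1} ··· w(K_m)^{α_m}. -/

import Mathlib

/-- The numerical radius of a real `n × n` matrix with respect to the standard inner
product: `w(K) = sup {|⟨Kf, f⟩| : ‖f‖₂ = 1}`. -/
noncomputable def numRad {n : ℕ} (A : Matrix (Fin n) (Fin n) ℝ) : ℝ :=
  sSup {x | ∃ f : EuclideanSpace ℝ (Fin n), ‖f‖ = 1 ∧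
    x = |(inner ℝ (Matrix.toEuclideanLin A f) f : ℝ)|}

/-! Replace a unit vector `f` by `|f|`: for entrywise nonnegative matrices this does not decrease
`|⟨Af, f⟩|`, so it suffices to bound `⟨Ag, g⟩ = ∑ₓᵧ A x y g x g y` for nonnegative unit `g`.
Since the weights sum to `1`, each term `(∏ⱼ Kⱼ x y ^ αⱼ) g x g y` equals
`∏ⱼ (Kⱼ x y g x g y) ^ αⱼ`, and Hölder's inequality over the index pairs `(x, y)` bounds the
sum by `∏ⱼ ⟨Kⱼ g, g⟩ ^ αⱼ ≤ ∏ⱼ w(Kⱼ) ^ αⱼ`. -/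

open Finset Matrix

theorem Real.sum_prod_rpow_le_prod_rpow_sum {ι κ : Type*} (s : Finset ι) (t : Finset κ)
    (a : κ → ι → ℝ) (w : κ → ℝ) (ha : ∀ j ∈ t, ∀ i ∈ s, 0 ≤ a j i) (hw : ∀ j ∈ t, 0 ≤ w j)
    (hw₁ : ∑ j ∈ t, w j = 1) :
    ∑ i ∈ s, ∏ j ∈ t, a j i ^ w j ≤ ∏ j ∈ t, (∑ i ∈ s, a j i) ^ w j := by
  set S : κ → ℝ := fun j => ∑ i ∈ s, a j i
  have hS : ∀ j ∈ t, 0 ≤ S j := fun j hj => sum_nonneg (ha j hj)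
  -- `a j i = S j * (a j i / S j)` also when `S j = 0`, since then every `a j i` vanishes
  have hfactor : ∀ i ∈ s,
      ∏ j ∈ t, a j i ^ w j = (∏ j ∈ t, S j ^ w j) * ∏ j ∈ t, (a j i / S j) ^ w j := by
    intro i hi
    rw [← prod_mul_distrib]
    refine prod_congr rfl fun j hj => ?_
    rw [← mul_rpow (hS j hj) (div_nonneg (ha j hj i hi) (hS j hj))]
    rcases (hS j hj).eq_or_lt with hSj | hSj
    · have : a j i = 0 := (sum_eq_zero_iff_of_nonneg (ha j hj)).mp hSj.symm i hi
      rw [← hSj, this, zero_mul]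
    · rw [mul_div_cancel₀ _ hSj.ne']
  have hamgm : ∑ i ∈ s, ∏ j ∈ t, (a j i / S j) ^ w j ≤ 1 :=
    calc ∑ i ∈ s, ∏ j ∈ t, (a j i / S j) ^ w j
        ≤ ∑ i ∈ s, ∑ j ∈ t, w j * (a j i / S j) := sum_le_sum fun i hi =>
          geom_mean_le_arith_mean_weighted t w _ hw hw₁
            fun j hj => div_nonneg (ha j hj i hi) (hS j hj)
      _ = ∑ j ∈ t, w j * (S j / S j) := by
          rw [sum_comm]
          simp only [S, ← mul_sum, sum_div]
      _ ≤ ∑ j ∈ t, w j := sum_le_sum fun j hj =>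
          mul_le_of_le_one_right (hw j hj) (div_self_le_one _)
      _ = 1 := hw₁
  calc ∑ i ∈ s, ∏ j ∈ t, a j i ^ w j
      = (∏ j ∈ t, S j ^ w j) * ∑ i ∈ s, ∏ j ∈ t, (a j i / S j) ^ w j := by
        rw [mul_sum]
        exact sum_congr rfl hfactor
    _ ≤ ∏ j ∈ t, S j ^ w j :=
        mul_le_of_le_one_right (prod_nonneg fun j hj => rpow_nonneg (hS j hj) _) hamgm

theorem Real.prod_mul_rpow_of_sum_eq_one {κ : Type*} {t : Finset κ} {b w : κ → ℝ} {c : ℝ}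
    (hb : ∀ j ∈ t, 0 ≤ b j) (hc : 0 ≤ c) (hw : ∀ j ∈ t, 0 ≤ w j) (hw₁ : ∑ j ∈ t, w j = 1) :
    ∏ j ∈ t, (b j * c) ^ w j = (∏ j ∈ t, b j ^ w j) * c := by
  rw [prod_congr rfl fun j hj => mul_rpow (hb j hj) hc, prod_mul_distrib,
    ← rpow_sum_of_nonneg hc hw, hw₁, rpow_one]

section

variable {n : ℕ}

theorem Matrix.inner_toEuclideanLin_self (A : Matrix (Fin n) (Fin n) ℝ)
    (f : EuclideanSpace ℝ (Fin n)) :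
    inner ℝ (toEuclideanLin A f) f = ∑ x, ∑ y, A x y * (f x * f y) := by
  simp only [toEuclideanLin, toLpLin_apply, PiLp.inner_apply, RCLike.inner_apply, conj_trivial,
    mulVec, dotProduct, mul_sum]
  exact sum_congr rfl fun x _ => sum_congr rfl fun y _ => by ring

theorem numRad_nonneg (A : Matrix (Fin n) (Fin n) ℝ) : 0 ≤ numRad A :=
  Real.sSup_nonneg fun _ ⟨_, _, hx⟩ => hx ▸ abs_nonneg _

theorem abs_inner_le_numRad (A : Matrix (Fin n) (Fin n) ℝ) {f : EuclideanSpace ℝ (Fin n)}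
    (hf : ‖f‖ = 1) : |inner ℝ (toEuclideanLin A f) f| ≤ numRad A := by
  set T := LinearMap.toContinuousLinearMap (toEuclideanLin A)
  have hbound : ∀ g : EuclideanSpace ℝ (Fin n), ‖g‖ = 1 →
      |inner ℝ (toEuclideanLin A g) g| ≤ ‖T‖ := fun g hg => calc
      |inner ℝ (toEuclideanLin A g) g| ≤ ‖toEuclideanLin A g‖ * ‖g‖ := abs_real_inner_le_norm _ _
      _ = ‖T g‖ := by simp [T, hg]
      _ ≤ ‖T‖ := by simpa [hg] using T.le_opNorm g
  exact le_csSup ⟨‖T‖, fun _ ⟨g, hg, hx⟩ => hx ▸ hbound g hg⟩ ⟨f, hf, rfl⟩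

theorem numRad_le_of_nonneg {A : Matrix (Fin n) (Fin n) ℝ} (hA : ∀ x y, 0 ≤ A x y) {c : ℝ}
    (hc : 0 ≤ c) (h : ∀ g : EuclideanSpace ℝ (Fin n), ‖g‖ = 1 → (∀ i, 0 ≤ g i) →
      ∑ x, ∑ y, A x y * (g x * g y) ≤ c) :
    numRad A ≤ c := by
  refine Real.sSup_le ?_ hc
  rintro _ ⟨f, hf, rfl⟩
  set g : EuclideanSpace ℝ (Fin n) := WithLp.toLp 2 fun i => |f i|
  have hg : ‖g‖ = 1 := by
    rw [← hf, EuclideanSpace.norm_eq, EuclideanSpace.norm_eq]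
    simp [g]
  calc |inner ℝ (toEuclideanLin A f) f| ≤ ∑ x, ∑ y, A x y * (g x * g y) := by
        rw [inner_toEuclideanLin_self]
        refine (abs_sum_le_sum_abs _ _).trans (sum_le_sum fun x _ => ?_)
        refine (abs_sum_le_sum_abs _ _).trans (sum_le_sum fun y _ => ?_)
        simp [g, abs_mul, abs_of_nonneg (hA x y)]
    _ ≤ c := h g hg fun i => abs_nonneg (f i)

end

/-- For nonnegative matrices `K j` and nonnegative weights `α j` summing to
`1`, the numerical radius satisfies
`w(K₁^{(α₁)} ∘ ⋯ ∘ K_m^{(α_m)}) ≤ w(K₁)^{α₁} ⋯ w(K_m)^{α_m}`. -/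
theorem numRad_hadamard_geom_mean_le {n m : ℕ} (K : Fin m → Matrix (Fin n) (Fin n) ℝ)
    (α : Fin m → ℝ) (hK : ∀ j x y, 0 ≤ K j x y) (hα : ∀ j, 0 ≤ α j)
    (hsum : ∑ j, α j = 1) :
    numRad (Matrix.of fun x y => ∏ j, (K j x y) ^ (α j)) ≤ ∏ j, numRad (K j) ^ (α j) := by
  have hα' : ∀ j ∈ univ, 0 ≤ α j := fun j _ => hα j
  have hmean_nonneg : ∀ x y, 0 ≤ of (fun x y => ∏ j, K j x y ^ α j) x y := fun x y => by
    rw [of_apply]; exact prod_nonneg fun j _ => Real.rpow_nonneg (hK j x y) _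
  refine numRad_le_of_nonneg hmean_nonneg
    (prod_nonneg fun j _ => Real.rpow_nonneg (numRad_nonneg _) _) fun g hg hg₀ => ?_
  have hterm : ∀ j x y, 0 ≤ K j x y * (g x * g y) :=
    fun j x y => mul_nonneg (hK j x y) (mul_nonneg (hg₀ x) (hg₀ y))
  calc ∑ x, ∑ y, of (fun x y => ∏ j, K j x y ^ α j) x y * (g x * g y)
      = ∑ p : Fin n × Fin n, ∏ j, (K j p.1 p.2 * (g p.1 * g p.2)) ^ α j := by
        simp only [Fintype.sum_prod_type, of_apply]
        refine sum_congr rfl fun x _ => sum_congr rfl fun y _ => ?_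
        rw [Real.prod_mul_rpow_of_sum_eq_one (fun j _ => hK j x y)
          (mul_nonneg (hg₀ x) (hg₀ y)) hα' hsum]
    _ ≤ ∏ j, (∑ p : Fin n × Fin n, K j p.1 p.2 * (g p.1 * g p.2)) ^ α j :=
        Real.sum_prod_rpow_le_prod_rpow_sum _ _ _ _ (fun j _ p _ => hterm j p.1 p.2) hα' hsum
    _ ≤ ∏ j, numRad (K j) ^ α j := by
        refine prod_le_prod (fun j _ => Real.rpow_nonneg (sum_nonneg fun p _ => hterm j p.1 p.2) _)
          fun j _ => Real.rpow_le_rpow (sum_nonneg fun p _ => hterm j p.1 p.2) ?_ (hα j)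
        simp only [Fintype.sum_prod_type]
        rw [← inner_toEuclideanLin_self]
        exact (le_abs_self _).trans (abs_inner_le_numRad (K j) hg)
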